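/- There exists a constant C > 3 with the following property: for all c > 3/2, μ ∈ [0,1], ε ∈ (0,1/4), and all (v,u) ∈ ℂ² with |u|² < ε and |v|² < ε, the Hessian of K_{μ,c}(v,u) = ½|u|² + c|v|² + 2|v|²⟨u,iv⟩ - μ Im(uv) - μ|v|²/|2v²-1| - (1-μ)/2 satisfies, for all (û,v̂) ∈ ℂ², D²K_{μ,c}(v,u)[(û,v̂),(û,v̂)] ≥ |û|² + 2c|v̂|² - Cε(|û|² + |v̂|²) - 2μ|Im(û v̂)| - 2μ|v̂|²/|2v²-1|. -/

import Mathlib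

open Complex

/-- `⟨a, i b⟩ = a₂b₁ - a₁b₂`. -/
def iprod (a b : ℂ) : ℝ := a.im * b.re - a.re * b.im

/-- The regularized Hamiltonian `K_{μ,c}` in Levi-Civita coordinates `(v,u)`. -/
noncomputable def Kreg (μ c : ℝ) : ℂ × ℂ → ℝ :=
  fun p => (1 / 2) * ‖p.2‖ ^ 2 + c * ‖p.1‖ ^ 2 + 2 * ‖p.1‖ ^ 2 * iprod p.2 p.1
    - μ * (p.2 * p.1).im - μ * ‖p.1‖ ^ 2 / ‖2 * p.1 ^ 2 - 1‖ - (1 - μ) / 2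

/-!
Along a line, `D²K(p)[h,h]` is the second derivative of `t ↦ K(p + t h)` at `0`, and `K` is smooth
near `p` because `|2v² - 1| > 1/2`; so it suffices to differentiate each term of `K` twice along
`t ↦ (v + t v̂, u + t û)`. The quadratic terms give exactly `|û|² + 2c|v̂|² - 2μ Im(û v̂)`. Each term
of the second derivative of the quartic `2|v|²⟨u, iv⟩` carries two of the small factors `u`, `v`,
so it is `O(ε)(|û|² + |v̂|²)`. In the second derivative of `|v|² |2v² - 1|⁻¹`, everything except
`2|v̂|² / |2v² - 1|` carries a factor `|v|²`: the first derivative of `|2v² - 1|⁻¹` is `O(|v|)`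
since `d(2v²) = 4v v̂`, and its second derivative is bounded since `|2v² - 1| > 1/2`.
-/

open Filter Topology

section TwoDerivs

variable {F : Type*} [NormedAddCommGroup F] [NormedSpace ℝ F]

/-- A junk-free substitute for `f₁ = deriv f x` and `f₂ = deriv (deriv f) x`. -/
def HasTwoDerivsAt (f : ℝ → F) (f₁ f₂ : F) (x : ℝ) : Prop :=
  ∃ f' : ℝ → F, (∀ᶠ t in 𝓝 x, HasDerivAt f (f' t) t) ∧ f' x = f₁ ∧ HasDerivAt f' f₂ x

variable {f g : ℝ → F} {f₁ f₂ g₁ g₂ : F} {x : ℝ}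

theorem HasTwoDerivsAt.unique (hf : HasTwoDerivsAt f f₁ f₂ x) (hg : HasTwoDerivsAt f g₁ g₂ x) :
    f₂ = g₂ := by
  obtain ⟨f', hf', -, hf₂⟩ := hf
  obtain ⟨g', hg', -, hg₂⟩ := hg
  have hfg : f' =ᶠ[𝓝 x] g' := (hf'.and hg').mono fun t ht => ht.1.unique ht.2
  exact hf₂.unique (hg₂.congr_of_eventuallyEq hfg)

theorem hasTwoDerivsAt_const (c : F) (x : ℝ) : HasTwoDerivsAt (fun _ => c) 0 0 x :=
  ⟨fun _ => 0, .of_forall fun t => hasDerivAt_const t c, rfl, hasDerivAt_const x 0⟩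

theorem hasTwoDerivsAt_line (a b : F) (x : ℝ) : HasTwoDerivsAt (fun t => a + t • b) b 0 x :=
  ⟨fun _ => b, .of_forall fun t => by simpa using ((hasDerivAt_id t).smul_const b).const_add a,
    rfl, hasDerivAt_const x b⟩

theorem HasTwoDerivsAt.add (hf : HasTwoDerivsAt f f₁ f₂ x) (hg : HasTwoDerivsAt g g₁ g₂ x) :
    HasTwoDerivsAt (fun t => f t + g t) (f₁ + g₁) (f₂ + g₂) x := by
  obtain ⟨f', hf', rfl, hf₂⟩ := hf
  obtain ⟨g', hg', rfl, hg₂⟩ := hg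
  exact ⟨fun t => f' t + g' t, (hf'.and hg').mono fun t ht => ht.1.add ht.2, rfl, hf₂.add hg₂⟩

theorem HasTwoDerivsAt.sub (hf : HasTwoDerivsAt f f₁ f₂ x) (hg : HasTwoDerivsAt g g₁ g₂ x) :
    HasTwoDerivsAt (fun t => f t - g t) (f₁ - g₁) (f₂ - g₂) x := by
  obtain ⟨f', hf', rfl, hf₂⟩ := hf
  obtain ⟨g', hg', rfl, hg₂⟩ := hg
  exact ⟨fun t => f' t - g' t, (hf'.and hg').mono fun t ht => ht.1.sub ht.2, rfl, hf₂.sub hg₂⟩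

theorem HasTwoDerivsAt.clm_comp {G : Type*} [NormedAddCommGroup G] [NormedSpace ℝ G]
    (L : F →L[ℝ] G) (hf : HasTwoDerivsAt f f₁ f₂ x) :
    HasTwoDerivsAt (fun t => L (f t)) (L f₁) (L f₂) x := by
  obtain ⟨f', hf', rfl, hf₂⟩ := hf
  exact ⟨fun t => L (f' t), hf'.mono fun t ht => L.hasFDerivAt.comp_hasDerivAt t ht, rfl,
    L.hasFDerivAt.comp_hasDerivAt x hf₂⟩

theorem HasTwoDerivsAt.comp {g : ℝ → F} {f : ℝ → ℝ} {f₁ f₂ : ℝ}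
    (hg : HasTwoDerivsAt g g₁ g₂ (f x)) (hf : HasTwoDerivsAt f f₁ f₂ x) :
    HasTwoDerivsAt (fun t => g (f t)) (f₁ • g₁) (f₂ • g₁ + f₁ ^ 2 • g₂) x := by
  obtain ⟨g', hg', rfl, hg₂⟩ := hg
  obtain ⟨f', hf', rfl, hf₂⟩ := hf
  have hfc : Tendsto f (𝓝 x) (𝓝 (f x)) := hf'.self_of_nhds.continuousAt
  refine ⟨fun t => f' t • g' (f t),
    ((hfc.eventually hg').and hf').mono fun t ht => ht.1.scomp t ht.2, rfl, ?_⟩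
  exact (hf₂.fun_smul (hg₂.scomp x hf'.self_of_nhds)).congr_deriv (by rw [pow_two, mul_smul]; abel)

end TwoDerivs

section NormedRing

variable {𝔸 : Type*} [NormedRing 𝔸] [NormedAlgebra ℝ 𝔸] {f g : ℝ → 𝔸} {f₁ f₂ g₁ g₂ : 𝔸} {x : ℝ}

theorem HasTwoDerivsAt.mul (hf : HasTwoDerivsAt f f₁ f₂ x) (hg : HasTwoDerivsAt g g₁ g₂ x) :
    HasTwoDerivsAt (fun t => f t * g t) (f₁ * g x + f x * g₁)
      (f₂ * g x + 2 * (f₁ * g₁) + f x * g₂) x := by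
  obtain ⟨f', hf', rfl, hf₂⟩ := hf
  obtain ⟨g', hg', rfl, hg₂⟩ := hg
  refine ⟨fun t => f' t * g t + f t * g' t, (hf'.and hg').mono fun t ht => ht.1.mul ht.2, rfl, ?_⟩
  exact ((hf₂.fun_mul hg'.self_of_nhds).add (hf'.self_of_nhds.fun_mul hg₂)).congr_deriv
    (by rw [two_mul]; abel)

theorem HasTwoDerivsAt.const_mul (c : 𝔸) (hf : HasTwoDerivsAt f f₁ f₂ x) :
    HasTwoDerivsAt (fun t => c * f t) (c * f₁) (c * f₂) x := by
  simpa using (hasTwoDerivsAt_const c x).mul hf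

theorem hasTwoDerivsAt_line_mul_line (a b c d : 𝔸) (x : ℝ) :
    HasTwoDerivsAt (fun t => (a + t • b) * (c + t • d)) (b * (c + x • d) + (a + x • b) * d)
      (2 * (b * d)) x := by
  simpa using (hasTwoDerivsAt_line a b x).mul (hasTwoDerivsAt_line c d x)

end NormedRing

theorem Real.hasTwoDerivsAt_rpow_const {s : ℝ} (hs : 0 < s) (r : ℝ) :
    HasTwoDerivsAt (fun y => y ^ r) (r * s ^ (r - 1)) (r * ((r - 1) * s ^ (r - 2))) s := by
  refine ⟨fun y => r * y ^ (r - 1), (eventually_gt_nhds hs).mono fun y hy =>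
    Real.hasDerivAt_rpow_const (Or.inl hy.ne'), rfl, ?_⟩
  simpa [sub_sub, one_add_one_eq_two] using
    (Real.hasDerivAt_rpow_const (p := r - 1) (Or.inl hs.ne')).const_mul r

open scoped RealInnerProductSpace

section InnerProduct

variable {E : Type*} [NormedAddCommGroup E] [InnerProductSpace ℝ E] {f : ℝ → E} {f₁ f₂ : E} {x : ℝ}

theorem HasTwoDerivsAt.norm_sq (hf : HasTwoDerivsAt f f₁ f₂ x) :
    HasTwoDerivsAt (fun t => ‖f t‖ ^ 2) (2 * ⟪f x, f₁⟫) (2 * (⟪f x, f₂⟫ + ‖f₁‖ ^ 2)) x := by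
  obtain ⟨f', hf', rfl, hf₂⟩ := hf
  refine ⟨fun t => 2 * ⟪f t, f' t⟫, hf'.mono fun t ht => ht.norm_sq, rfl, ?_⟩
  simpa [real_inner_self_eq_norm_sq] using ((hf'.self_of_nhds).inner ℝ hf₂).const_mul 2

theorem Real.sq_rpow_neg_natCast_div_two {y : ℝ} (hy : 0 ≤ y) (k : ℕ) :
    (y ^ 2) ^ (-(k : ℝ) / 2) = y⁻¹ ^ k := by
  rw [← Real.rpow_natCast_mul hy, show ((2 : ℕ) : ℝ) * (-(k : ℝ) / 2) = -(k : ℝ) by push_cast; ring,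
    Real.rpow_neg hy, Real.rpow_natCast, inv_pow]

theorem HasTwoDerivsAt.inv_norm (hf : HasTwoDerivsAt f f₁ f₂ x) (hx : f x ≠ 0) :
    HasTwoDerivsAt (fun t => ‖f t‖⁻¹) (-(⟪f x, f₁⟫ * ‖f x‖⁻¹ ^ 3))
      (3 * ⟪f x, f₁⟫ ^ 2 * ‖f x‖⁻¹ ^ 5 - (⟪f x, f₂⟫ + ‖f₁‖ ^ 2) * ‖f x‖⁻¹ ^ 3) x := by
  have h := HasTwoDerivsAt.comp (f := fun t => ‖f t‖ ^ 2)
    (Real.hasTwoDerivsAt_rpow_const (pow_pos (norm_pos_iff.2 hx) 2) (-(1 : ℕ) / 2)) hf.norm_sq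
  rw [show -((1 : ℕ) : ℝ) / 2 - 1 = -(3 : ℕ) / 2 by norm_num,
    show -((1 : ℕ) : ℝ) / 2 - 2 = -(5 : ℕ) / 2 by norm_num] at h
  simp only [Real.sq_rpow_neg_natCast_div_two (norm_nonneg _), pow_one, smul_eq_mul] at h
  convert h using 1 <;> push_cast <;> ring

end InnerProduct

theorem ContDiffAt.hasTwoDerivsAt_line {E F : Type*} [NormedAddCommGroup E] [NormedSpace ℝ E]
    [NormedAddCommGroup F] [NormedSpace ℝ F] {f : E → F} {p : E} (hf : ContDiffAt ℝ 2 f p) (h : E) :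
    HasTwoDerivsAt (fun t : ℝ => f (p + t • h)) (fderiv ℝ f p h)
      (fderiv ℝ (fderiv ℝ f) p h h) 0 := by
  have hγ : ∀ t : ℝ, HasDerivAt (fun t : ℝ => p + t • h) h t := fun t => by
    simpa using ((hasDerivAt_id t).smul_const h).const_add p
  have hγ0 : Tendsto (fun t : ℝ => p + t • h) (𝓝 0) (𝓝 p) := by
    simpa using (hγ 0).continuousAt.tendsto
  have hdiff : ∀ᶠ q in 𝓝 p, DifferentiableAt ℝ f q :=
    (hf.eventually (by simp)).mono fun q hq => hq.differentiableAt two_ne_zero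
  have hdd : HasFDerivAt (fderiv ℝ f) (fderiv ℝ (fderiv ℝ f) p) (p + (0 : ℝ) • h) := by
    simpa using ((hf.fderiv_right (m := 1) (by norm_num)).differentiableAt one_ne_zero).hasFDerivAt
  refine ⟨fun t => fderiv ℝ f (p + t • h) h,
    (hγ0.eventually hdiff).mono fun t ht => ht.hasFDerivAt.comp_hasDerivAt t (hγ t), by simp, ?_⟩
  exact (ContinuousLinearMap.apply ℝ F h).hasFDerivAt.comp_hasDerivAt 0
    (hdd.comp_hasDerivAt 0 (hγ 0))

open ComplexConjugate

theorem one_half_lt_norm_two_mul_sq_sub_one {v : ℂ} (hv : ‖v‖ ^ 2 < 1 / 4) :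
    1 / 2 < ‖2 * v ^ 2 - 1‖ := by
  have h := norm_sub_le (2 * v ^ 2) (2 * v ^ 2 - 1)
  rw [sub_sub_cancel, norm_one, norm_mul, norm_pow, Complex.norm_two] at h
  linarith

theorem contDiffAt_Kreg (μ c : ℝ) {p : ℂ × ℂ} (hp : 2 * p.1 ^ 2 - 1 ≠ 0) :
    ContDiffAt ℝ 2 (Kreg μ c) p := by
  have hre : ContDiff ℝ 2 re := reCLM.contDiff
  have him : ContDiff ℝ 2 im := imCLM.contDiff
  have hn : ContDiffAt ℝ 2 (fun q : ℂ × ℂ => ‖2 * q.1 ^ 2 - 1‖) p :=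
    (contDiffAt_norm ℝ hp).comp p (by fun_prop)
  unfold Kreg iprod
  simp only [Complex.sq_norm, Complex.normSq_apply]
  fun_prop (disch := simpa using hp)

theorem iprod_eq_im_mul_conj (a b : ℂ) : iprod a b = (a * conj b).im := by
  simp [iprod, mul_im]; ring

theorem abs_iprod_le (a b : ℂ) : |iprod a b| ≤ ‖a‖ * ‖b‖ := by
  simpa [iprod_eq_im_mul_conj] using abs_im_le_norm (a * conj b)

theorem exists_hasTwoDerivsAt_norm_sq_mul_iprod {ε : ℝ} {u v : ℂ} (hu : ‖u‖ ^ 2 ≤ ε)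
    (hv : ‖v‖ ^ 2 ≤ ε) (uh vh : ℂ) :
    ∃ a b, HasTwoDerivsAt (fun t : ℝ => ‖v + t • vh‖ ^ 2 * iprod (u + t • uh) (v + t • vh)) a b 0 ∧
      |b| ≤ 9 * ε * (‖uh‖ ^ 2 + ‖vh‖ ^ 2) := by
  have hι : HasTwoDerivsAt (fun t : ℝ => iprod (u + t • uh) (v + t • vh))
      (iprod uh v + iprod u vh) (2 * iprod uh vh) 0 := by
    have := (hasTwoDerivsAt_line_mul_line u uh (conj v) (conj vh) 0).clm_comp imCLM
    simp only [zero_smul, add_zero, imCLM_apply] at this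
    convert this using 2 with t
    · simp [iprod_eq_im_mul_conj, Complex.real_smul]
    · simp [iprod_eq_im_mul_conj]
    · simp [iprod_eq_im_mul_conj]
  refine ⟨_, _, (hasTwoDerivsAt_line v vh 0).norm_sq.mul hι, ?_⟩
  simp only [zero_smul, add_zero, inner_zero_right, zero_add]
  have hP := abs_real_inner_le_norm v vh
  have h₀ := abs_iprod_le u v
  have h₁ : |iprod uh v + iprod u vh| ≤ ‖uh‖ * ‖v‖ + ‖u‖ * ‖vh‖ :=
    (abs_add_le _ _).trans (add_le_add (abs_iprod_le uh v) (abs_iprod_le u vh))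
  have h₂ := abs_iprod_le uh vh
  have huv : ‖u‖ * ‖v‖ ≤ ε := by nlinarith [sq_nonneg (‖u‖ - ‖v‖)]
  calc _ ≤ |2 * ‖vh‖ ^ 2 * iprod u v| + |2 * (2 * ⟪v, vh⟫ * (iprod uh v + iprod u vh))|
          + |‖v‖ ^ 2 * (2 * iprod uh vh)| := abs_add_three _ _ _
    _ = 2 * ‖vh‖ ^ 2 * |iprod u v| + 4 * |⟪v, vh⟫| * |iprod uh v + iprod u vh|
          + 2 * ‖v‖ ^ 2 * |iprod uh vh| := by simp only [abs_mul, abs_pow, abs_norm, abs_two]; ring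
    _ ≤ 2 * ‖vh‖ ^ 2 * (‖u‖ * ‖v‖) + 4 * (‖v‖ * ‖vh‖) * (‖uh‖ * ‖v‖ + ‖u‖ * ‖vh‖)
          + 2 * ‖v‖ ^ 2 * (‖uh‖ * ‖vh‖) := by gcongr
    _ = 6 * (‖u‖ * ‖v‖) * ‖vh‖ ^ 2 + 6 * ‖v‖ ^ 2 * (‖uh‖ * ‖vh‖) := by ring
    _ ≤ 6 * ε * ‖vh‖ ^ 2 + 6 * ε * (‖uh‖ * ‖vh‖) := by gcongr
    _ ≤ 9 * ε * (‖uh‖ ^ 2 + ‖vh‖ ^ 2) := by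
        nlinarith [mul_nonneg (hv.trans' (sq_nonneg _)) (sq_nonneg (‖uh‖ - ‖vh‖))]

theorem hasTwoDerivsAt_two_mul_sq_sub_one (v vh : ℂ) :
    HasTwoDerivsAt (fun t : ℝ => 2 * (v + t • vh) ^ 2 - 1) (4 * (v * vh)) (4 * vh ^ 2) 0 := by
  have := ((hasTwoDerivsAt_line_mul_line v vh v vh 0).const_mul 2).sub (hasTwoDerivsAt_const 1 0)
  simp only [zero_smul, add_zero, sub_zero, ← pow_two] at this
  rwa [show (4 : ℂ) * (v * vh) = 2 * (vh * v + v * vh) by ring,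
    show (4 : ℂ) * vh ^ 2 = 2 * (2 * vh ^ 2) by ring]

theorem exists_hasTwoDerivsAt_norm_sq_mul_inv_norm {ε : ℝ} {v : ℂ} (hv : ‖v‖ ^ 2 ≤ ε)
    (hε : ε < 1 / 4) (vh : ℂ) :
    ∃ a b, HasTwoDerivsAt
        (fun t : ℝ => ‖v + t • vh‖ ^ 2 * ‖2 * (v + t • vh) ^ 2 - 1‖⁻¹) a b 0 ∧
      b ≤ 2 * ‖vh‖ ^ 2 / ‖2 * v ^ 2 - 1‖ + 176 * ε * ‖vh‖ ^ 2 := by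
  have hw := one_half_lt_norm_two_mul_sq_sub_one (hv.trans_lt hε)
  have hg := (hasTwoDerivsAt_two_mul_sq_sub_one v vh).inv_norm (by
    simpa using norm_pos_iff.1 (by linarith : 0 < ‖2 * v ^ 2 - 1‖))
  refine ⟨_, _, (hasTwoDerivsAt_line v vh 0).norm_sq.mul hg, ?_⟩
  simp only [zero_smul, add_zero, inner_zero_right, zero_add]
  set w := 2 * v ^ 2 - 1
  set k := ‖w‖⁻¹
  have hk0 : 0 < k := inv_pos.2 (by linarith)
  have hk : k ≤ 2 := by rw [inv_le_comm₀ (by linarith) two_pos]; linarith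
  have hkw : ‖w‖ * k = 1 := mul_inv_cancel₀ (by linarith)
  have hW₁ : |⟪w, 4 * (v * vh)⟫| * k ≤ 4 * (‖v‖ * ‖vh‖) := by
    calc _ ≤ ‖w‖ * ‖4 * (v * vh)‖ * k := by gcongr; exact abs_real_inner_le_norm _ _
      _ = 4 * (‖v‖ * ‖vh‖) := by rw [mul_right_comm, hkw, one_mul]; simp
  have hW₂ : |⟪w, 4 * vh ^ 2⟫| * k ≤ 4 * ‖vh‖ ^ 2 := by
    calc _ ≤ ‖w‖ * ‖4 * vh ^ 2‖ * k := by gcongr; exact abs_real_inner_le_norm _ _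
      _ = 4 * ‖vh‖ ^ 2 := by rw [mul_right_comm, hkw, one_mul]; simp
  have hg₁ : |⟪w, 4 * (v * vh)⟫ * k ^ 3| ≤ 16 * (‖v‖ * ‖vh‖) := by
    calc _ = |⟪w, 4 * (v * vh)⟫| * k * k ^ 2 := by
          rw [abs_mul, abs_of_pos (pow_pos hk0 3)]; ring
      _ ≤ 4 * (‖v‖ * ‖vh‖) * 2 ^ 2 := by gcongr
      _ = 16 * (‖v‖ * ‖vh‖) := by ring
  have hg₂ : 3 * ⟪w, 4 * (v * vh)⟫ ^ 2 * k ^ 5 - (⟪w, 4 * vh ^ 2⟫ + ‖4 * (v * vh)‖ ^ 2) * k ^ 3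
      ≤ 112 * ‖vh‖ ^ 2 := by
    calc _ ≤ 3 * (|⟪w, 4 * (v * vh)⟫| * k) ^ 2 * k ^ 3 + |⟪w, 4 * vh ^ 2⟫| * k * k ^ 2 := by
          rw [mul_pow, sq_abs]
          nlinarith [neg_abs_le ⟪w, 4 * vh ^ 2⟫, pow_pos hk0 3, sq_nonneg ‖4 * (v * vh)‖]
      _ ≤ 3 * (4 * (‖v‖ * ‖vh‖)) ^ 2 * 2 ^ 3 + 4 * ‖vh‖ ^ 2 * 2 ^ 2 := by gcongr
      _ = 384 * ‖v‖ ^ 2 * ‖vh‖ ^ 2 + 16 * ‖vh‖ ^ 2 := by ring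
      _ ≤ 112 * ‖vh‖ ^ 2 := by nlinarith [sq_nonneg ‖vh‖]
  have hcross : 2 * (2 * ⟪v, vh⟫ * -(⟪w, 4 * (v * vh)⟫ * k ^ 3)) ≤ 64 * ε * ‖vh‖ ^ 2 := by
    have h := mul_le_mul (abs_real_inner_le_norm v vh) hg₁ (abs_nonneg _) (by positivity)
    rw [← abs_mul] at h
    nlinarith [neg_abs_le (⟪v, vh⟫ * (⟪w, 4 * (v * vh)⟫ * k ^ 3)),
      mul_le_mul_of_nonneg_right hv (sq_nonneg ‖vh‖)]
  have hsecond := mul_le_mul_of_nonneg_left hg₂ (sq_nonneg ‖v‖)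
  rw [div_eq_mul_inv]
  nlinarith [mul_le_mul_of_nonneg_right hv (sq_nonneg ‖vh‖)]

theorem exists_hasTwoDerivsAt_Kreg_line {c μ ε : ℝ} {u v : ℂ} (hμ : μ ∈ Set.Icc (0 : ℝ) 1)
    (hε : ε < 1 / 4) (hu : ‖u‖ ^ 2 ≤ ε) (hv : ‖v‖ ^ 2 ≤ ε) (uh vh : ℂ) :
    ∃ a b, HasTwoDerivsAt (fun t : ℝ => Kreg μ c ((v, u) + t • (vh, uh))) a b 0 ∧
      ‖uh‖ ^ 2 + 2 * c * ‖vh‖ ^ 2 - 194 * ε * (‖uh‖ ^ 2 + ‖vh‖ ^ 2)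
        - 2 * μ * |(uh * vh).im| - 2 * μ * ‖vh‖ ^ 2 / ‖2 * v ^ 2 - 1‖ ≤ b := by
  obtain ⟨_, b₃, h₃, hb₃⟩ := exists_hasTwoDerivsAt_norm_sq_mul_iprod hu hv uh vh
  obtain ⟨_, b₅, h₅, hb₅⟩ := exists_hasTwoDerivsAt_norm_sq_mul_inv_norm hv hε vh
  have hK := ((((((hasTwoDerivsAt_line u uh 0).norm_sq.const_mul (1 / 2)).add
    ((hasTwoDerivsAt_line v vh 0).norm_sq.const_mul c)).add (h₃.const_mul 2)).sub
    (((hasTwoDerivsAt_line_mul_line u uh v vh 0).clm_comp imCLM).const_mul μ)).sub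
    (h₅.const_mul μ)).sub (hasTwoDerivsAt_const ((1 - μ) / 2) 0)
  have hline : (fun t : ℝ => Kreg μ c ((v, u) + t • (vh, uh))) = fun t : ℝ =>
      1 / 2 * ‖u + t • uh‖ ^ 2 + c * ‖v + t • vh‖ ^ 2
        + 2 * (‖v + t • vh‖ ^ 2 * iprod (u + t • uh) (v + t • vh))
        - μ * imCLM ((u + t • uh) * (v + t • vh))
        - μ * (‖v + t • vh‖ ^ 2 * ‖2 * (v + t • vh) ^ 2 - 1‖⁻¹) - (1 - μ) / 2 := by
    funext t
    simp only [Kreg, Prod.smul_mk, Prod.mk_add_mk, imCLM_apply]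
    ring
  refine ⟨_, _, hline ▸ hK, ?_⟩
  have him : (2 * (uh * vh)).im = 2 * (uh * vh).im := by simp
  simp only [inner_zero_right, zero_add, imCLM_apply, him, sub_zero]
  have hε₀ : 0 ≤ ε := (sq_nonneg _).trans hv
  have h176 : 0 ≤ 176 * ε * ‖vh‖ ^ 2 := by positivity
  simp only [div_eq_mul_inv] at hb₅ ⊢
  linarith [abs_le.1 hb₃, mul_le_mul_of_nonneg_left hb₅ hμ.1, mul_le_of_le_one_left h176 hμ.2,
    mul_le_mul_of_nonneg_left (le_abs_self (uh * vh).im) hμ.1,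
    mul_nonneg hε₀ (sq_nonneg ‖uh‖), mul_nonneg hε₀ (sq_nonneg ‖vh‖)]

theorem hessian_lower_bound_universal_constant :
    ∃ C : ℝ, 3 < C ∧
      ∀ (c μ ε : ℝ) (v u : ℂ), 3 / 2 < c → μ ∈ Set.Icc (0 : ℝ) 1 →
        ε ∈ Set.Ioo (0 : ℝ) (1 / 4) → ‖u‖ ^ 2 < ε → ‖v‖ ^ 2 < ε →
        ∀ uh vh : ℂ,
          fderiv ℝ (fderiv ℝ (Kreg μ c)) (v, u) (vh, uh) (vh, uh)
            ≥ ‖uh‖ ^ 2 + 2 * c * ‖vh‖ ^ 2 - C * ε * (‖uh‖ ^ 2 + ‖vh‖ ^ 2)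
              - 2 * μ * |(uh * vh).im| - 2 * μ * ‖vh‖ ^ 2 / ‖2 * v ^ 2 - 1‖ := by
  refine ⟨194, by norm_num, ?_⟩
  rintro c μ ε v u - hμ ⟨-, hε⟩ hu hv uh vh
  have hw : 2 * v ^ 2 - 1 ≠ 0 := norm_pos_iff.1 <| by
    linarith [one_half_lt_norm_two_mul_sq_sub_one (hv.trans hε)]
  obtain ⟨_, b, hb, hle⟩ := exists_hasTwoDerivsAt_Kreg_line hμ hε hu.le hv.le uh vh
  rw [((contDiffAt_Kreg μ c (p := (v, u)) hw).hasTwoDerivsAt_line (vh, uh)).unique hb]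
  exact hle
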